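/- Let ε ∈ [0,1] and define, for a nonincreasing sequence x ∈ [0,1]^ℕ with x_0 = 1, the function F_i(x) = λ[(1−2ε)(x_{i−1}² − x_i²) + 2ε(x_{i−1} − x_i)] − (x_i − x_{i+1}). Then for each i ≥ 1 and each j ≠ i, F_i(x) is nondecreasing in x_j. In particular, the partial derivative with respect to x_{i−1}, namely λ[2(1−2ε)x_{i−1} + 2ε], is nonnegative for all x_{i−1} ∈ [0,1]. -/

import Mathlib

/-!
Write `F_i(x) = λ (g(x_{i-1}) - g(x_i)) - (x_i - x_{i+1})` with `g(a) = (1-2ε) a² + 2ε a`.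
For `j ≠ i` the coordinate `x_j` enters `F_i` only through `λ g(x_{i-1})` or `+x_{i+1}`,
so it suffices that `g` is nondecreasing on `[0,1]`. Its derivative `2(1-2ε) a + 2ε` is
affine in `a`, with values `2ε ≥ 0` and `2(1-ε) ≥ 0` at the endpoints.
-/

/-- Drift function of the Po2-ε mean-field. -/
noncomputable def po2epsF (lam ε : ℝ) (x : ℕ → ℝ) (i : ℕ) : ℝ :=
  lam * ((1 - 2 * ε) * ((x (i - 1))^2 - (x i)^2) + 2 * ε * (x (i - 1) - x i))
    - (x i - x (i + 1))

namespace Po2eps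

def g (ε a : ℝ) : ℝ := (1 - 2 * ε) * a ^ 2 + 2 * ε * a

lemma po2epsF_eq (lam ε : ℝ) (x : ℕ → ℝ) (i : ℕ) :
    po2epsF lam ε x i = lam * (g ε (x (i - 1)) - g ε (x i)) - (x i - x (i + 1)) := by
  unfold po2epsF g
  ring

lemma deriv_g_nonneg {ε a : ℝ} (hε0 : 0 ≤ ε) (hε1 : ε ≤ 1) (ha0 : 0 ≤ a) (ha1 : a ≤ 1) :
    0 ≤ 2 * (1 - 2 * ε) * a + 2 * ε := by
  have hconvex : 2 * (1 - 2 * ε) * a + 2 * ε = 2 * ε * (1 - a) + 2 * (1 - ε) * a := by ring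
  rw [hconvex]
  have := mul_nonneg hε0 (sub_nonneg.2 ha1)
  have := mul_nonneg (sub_nonneg.2 hε1) ha0
  linarith

-- `g` is quadratic, so its difference quotient is its derivative at the midpoint.
lemma g_sub (ε a b : ℝ) :
    g ε b - g ε a = (b - a) * (2 * (1 - 2 * ε) * ((a + b) / 2) + 2 * ε) := by
  unfold g
  ring

lemma g_monotoneOn {ε : ℝ} (hε0 : 0 ≤ ε) (hε1 : ε ≤ 1) : MonotoneOn (g ε) (Set.Icc 0 1) := by
  intro a ⟨ha0, ha1⟩ b ⟨hb0, hb1⟩ hab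
  have hslope := deriv_g_nonneg hε0 hε1 (a := (a + b) / 2) (by linarith) (by linarith)
  have hdiff := g_sub ε a b
  nlinarith [mul_nonneg (sub_nonneg.2 hab) hslope]

lemma po2epsF_le_of_le_of_eqOn_ne {lam ε : ℝ} (hlam : 0 ≤ lam) (hε0 : 0 ≤ ε) (hε1 : ε ≤ 1)
    {i j : ℕ} (hji : j ≠ i) {x x' : ℕ → ℝ} (hagree : ∀ k, k ≠ j → x k = x' k)
    (hle : x j ≤ x' j) (hx0 : 0 ≤ x j) (hx'1 : x' j ≤ 1) :
    po2epsF lam ε x i ≤ po2epsF lam ε x' i := by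
  rw [po2epsF_eq, po2epsF_eq, hagree i hji.symm]
  by_cases hprev : j = i - 1
  · subst hprev
    have hg : g ε (x (i - 1)) ≤ g ε (x' (i - 1)) :=
      g_monotoneOn hε0 hε1 ⟨hx0, hle.trans hx'1⟩ ⟨hx0.trans hle, hx'1⟩ hle
    rw [hagree (i + 1) (by omega)]
    nlinarith [mul_le_mul_of_nonneg_left hg hlam]
  · rw [hagree (i - 1) (Ne.symm hprev)]
    by_cases hnext : j = i + 1
    · subst hnext
      linarith
    · rw [hagree (i + 1) (Ne.symm hnext)]

end Po2eps

theorem po2epsF_quasimonotone (lam ε : ℝ) (hlam : 0 < lam)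
    (hε0 : 0 ≤ ε) (hε1 : ε ≤ 1) :
    (∀ i : ℕ, 1 ≤ i → ∀ j : ℕ, j ≠ i → ∀ x x' : ℕ → ℝ,
      (∀ k : ℕ, 0 ≤ x k ∧ x k ≤ 1) → (∀ k : ℕ, 0 ≤ x' k ∧ x' k ≤ 1) →
      x 0 = 1 → x' 0 = 1 →
      (∀ k : ℕ, x (k + 1) ≤ x k) → (∀ k : ℕ, x' (k + 1) ≤ x' k) →
      (∀ k : ℕ, k ≠ j → x k = x' k) → x j ≤ x' j →
      po2epsF lam ε x i ≤ po2epsF lam ε x' i) ∧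
    (∀ a : ℝ, 0 ≤ a → a ≤ 1 → 0 ≤ lam * (2 * (1 - 2 * ε) * a + 2 * ε)) := by
  refine ⟨?_, fun a ha0 ha1 => mul_nonneg hlam.le (Po2eps.deriv_g_nonneg hε0 hε1 ha0 ha1)⟩
  intro i _ j hji x x' hx hx' _ _ _ _ hagree hle
  exact Po2eps.po2epsF_le_of_le_of_eqOn_ne hlam.le hε0 hε1 hji hagree hle (hx j).1 (hx' j).2
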